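/- Let k be an infinite field. Then H₁(SL₂(k[t,t⁻¹]); Z) = 0; equivalently, the group SL₂(k[t,t⁻¹]) is perfect (equal to its own commutator subgroup). -/

import Mathlib

/-! ### Group homology via coinvariants of the standard resolution

For a commutative ring `R` and a group `G`, we define the group homology `H_n(G; R)`
(with trivial coefficients `R`) as the `n`-th homology of the complex obtained by applying the
coinvariants functor to the standard projective resolution of the trivial representation `R`
of `G`, together with the maps induced by group homomorphisms. -/

open CategoryTheory

namespace GH

variable (R : Type) [CommRing R] (G : Type) [Group G]
def coinvKer (V : Rep.{0} R G) : Submodule R V :=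
  Submodule.span R {x | ∃ (g : G) (v : V), V.ρ g v - v = x}
lemma map_coinvKer_le {V W : Rep.{0} R G} (f : V ⟶ W) :
    coinvKer R G V ≤ (coinvKer R G W).comap f.hom.toLinearMap := by
  rw [coinvKer, Submodule.span_le]
  rintro x ⟨g, v, rfl⟩
  rw [SetLike.mem_coe, Submodule.mem_comap]
  refine Submodule.subset_span ⟨g, f.hom v, ?_⟩
  rw [← Rep.hom_comm_apply]
  exact (map_sub f.hom _ _).symm
noncomputable def coinvFunctor : Rep.{0} R G ⥤ ModuleCat R where
  obj V := ModuleCat.of R (V ⧸ coinvKer R G V)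
  map {V W} f := ModuleCat.ofHom (Submodule.mapQ _ _ f.hom.toLinearMap (map_coinvKer_le R G f))
  map_id V := by ext : 1; apply Submodule.linearMap_qext; ext x; rfl
  map_comp {U V W} f g := by ext : 1; apply Submodule.linearMap_qext; ext x; rfl
lemma coinvFunctor_map_mk {V W : Rep.{0} R G} (f : V ⟶ W) (x : V) :
    (coinvFunctor R G).map f (Submodule.Quotient.mk x) = Submodule.Quotient.mk (f.hom x) := rfl
instance coinvFunctor_additive : (coinvFunctor R G).Additive where
  map_add {V W f g} := by ext : 1; apply Submodule.linearMap_qext; ext x; rfl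

/-- The chain complex of coinvariants of the standard projective resolution of the trivial
representation `R` of `G`; its homology is the group homology `H_*(G; R)`. -/
noncomputable def chainComplex : ChainComplex (ModuleCat R) ℕ :=
  ((coinvFunctor R G).mapHomologicalComplex _).obj (Rep.standardComplex R G)

/-- The simplicial `R`-module whose alternating face map complex agrees with `chainComplex`. -/
noncomputable def simplicialCoinv : CategoryTheory.SimplicialObject (ModuleCat R) :=
  classifyingSpaceUniversalCover G ⋙ Rep.linearization R G ⋙ coinvFunctor R G
variable {G} {G' : Type} [Group G'] (φ : G →* G')
noncomputable def coverMap (n : SimplexCategoryᵒᵖ) :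
    (((classifyingSpaceUniversalCover G).obj n).V →₀ R) →ₗ[R]
      (((classifyingSpaceUniversalCover G').obj n).V →₀ R) :=
  Finsupp.lmapDomain R R (fun v i => φ (v i))
/-- `coverMap` transported to the monoid algebras `R[Gⁿ⁺¹]` carrying the linearizations. -/
noncomputable def coverMapA (n : SimplexCategoryᵒᵖ) :
    ((classifyingSpaceUniversalCover G ⋙ Rep.linearization R G).obj n) →ₗ[R]
      ((classifyingSpaceUniversalCover G' ⋙ Rep.linearization R G').obj n) :=
  (MonoidAlgebra.coeffLinearEquiv R).symm.toLinearMap ∘ₗ coverMap R φ n ∘ₗ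
    (MonoidAlgebra.coeffLinearEquiv R).toLinearMap
lemma lmap_comm (n : SimplexCategoryᵒᵖ) (g : G)
    (x : ((classifyingSpaceUniversalCover G ⋙ Rep.linearization R G).obj n)) :
    coverMapA R φ n (((classifyingSpaceUniversalCover G ⋙ Rep.linearization R G).obj n).ρ g x) =
      (((classifyingSpaceUniversalCover G' ⋙ Rep.linearization R G').obj n).ρ (φ g))
        (coverMapA R φ n x) := by
  induction x using MonoidAlgebra.induction_linear with
  | zero => simp
  | add f h hf hh => rw [map_add, map_add, hf, hh, map_add, map_add]
  | single w r =>
      simp [coverMapA, coverMap, Representation.linearize]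
      erw [Finsupp.lmapDomain_apply, Finsupp.mapDomain_single, Finsupp.lmapDomain_apply,
        Finsupp.mapDomain_single]
      simp [MonoidAlgebra.mapDomainLinearMap]
      erw [Finsupp.mapDomain_single]
      congr 1
      funext i
      show φ (g * w i) = φ g * φ (w i)
      rw [map_mul]
lemma simplicialMap_aux (n : SimplexCategoryᵒᵖ) :
    coinvKer R G ((classifyingSpaceUniversalCover G ⋙ Rep.linearization R G).obj n) ≤
      (coinvKer R G' ((classifyingSpaceUniversalCover G' ⋙ Rep.linearization R G').obj n)).comap
        (coverMapA R φ n) := by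
  rw [coinvKer, Submodule.span_le]
  rintro x ⟨g, v, rfl⟩
  rw [SetLike.mem_coe, Submodule.mem_comap]
  refine Submodule.subset_span ⟨φ g, coverMapA R φ n v, ?_⟩
  rw [← lmap_comm]
  exact (map_sub (coverMapA R φ n) _ _).symm
noncomputable def simplicialMap :
    simplicialCoinv R G ⟶ simplicialCoinv R G' where
  app n := ModuleCat.ofHom (Submodule.mapQ _ _ (coverMapA R φ n) (simplicialMap_aux R φ n))
  naturality {n m} f := by
    ext : 1
    apply Submodule.linearMap_qext
    apply LinearMap.ext
    intro x
    show Submodule.Quotient.mk (coverMapA R φ m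
        (((Rep.linearization R G).map ((classifyingSpaceUniversalCover G).map f)).hom x)) =
      Submodule.Quotient.mk (((Rep.linearization R G').map
        ((classifyingSpaceUniversalCover G').map f)).hom (coverMapA R φ n x))
    congr 1
    induction x using MonoidAlgebra.induction_linear with
    | zero => simp
    | add a b ha hb => rw [map_add, map_add, ha, hb, map_add, map_add]
    | single w r =>
        simp [coverMapA, coverMap]
        erw [Representation.linearizeMap_single, MonoidAlgebra.coeff_single,
          Finsupp.lmapDomain_apply, Finsupp.mapDomain_single, Finsupp.lmapDomain_apply,
          Finsupp.mapDomain_single, MonoidAlgebra.ofCoeff_single,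
          Representation.linearizeMap_single]
        rfl

/-- Group homology `H_n(G; R)` with trivial coefficients `R`. -/
noncomputable def H (n : ℕ) (G : Type) [Group G] : ModuleCat R := (chainComplex R G).homology n

lemma chainComplex_eq (G : Type) [Group G] :
    chainComplex R G =
      (AlgebraicTopology.alternatingFaceMapComplex (ModuleCat R)).obj (simplicialCoinv R G) :=
  Functor.congr_obj (AlgebraicTopology.map_alternatingFaceMapComplex (coinvFunctor R G))
    (classifyingSpaceUniversalCover G ⋙ Rep.linearization R G)

/-- The map of chain complexes induced by a group homomorphism. -/
noncomputable def chainMap : chainComplex R G ⟶ chainComplex R G' :=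
  eqToHom (chainComplex_eq R G) ≫
    (AlgebraicTopology.alternatingFaceMapComplex (ModuleCat R)).map (simplicialMap R φ) ≫
      eqToHom (chainComplex_eq R G').symm

/-- The map on group homology induced by a group homomorphism. -/
noncomputable def Hmap (n : ℕ) : H R n G ⟶ H R n G' :=
  HomologicalComplex.homologyMap (chainMap R φ) n

end GH

namespace GH

/-- `SL₂(A)`: the special linear group of 2×2 matrices over `A`. -/
abbrev SL2 (A : Type) [CommRing A] := Matrix.SpecialLinearGroup (Fin 2) A

end GH

/-!
In the coinvariant chains of the standard resolution, the class of a 1-simplex `(g₀, g₁)` depends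
only on `g₀⁻¹ g₁`, and the boundary of `(1, g, g h)` shows that modulo boundaries `g ↦ [1, g]` is a
homomorphism into an abelian group. It therefore kills a perfect group, so every 1-chain is a
boundary and `H₁ = 0`.

For perfectness: if `u` and `u² - 1` are units (take `u ∈ k` with `u ≠ 0, ±1`, possible as `k` is
infinite), then `⁅diag(u, u⁻¹), E₁₂(x)⁆ = E₁₂((u² - 1) x)`, and similarly for `E₂₁`, so every
elementary matrix is a commutator. The Laurent polynomial ring is Euclidean for the width (the
least degree of a polynomial `T ^ n * f`), so row reduction writes every matrix of `SL₂` as a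
product of elementary matrices.
-/
namespace GH

variable (R : Type) [CommRing R] (G : Type) [Group G]

/-- The preimage of the 1-boundaries of the coinvariant complex `chainComplex R G`: the quotient
by it is the module of coinvariant 1-chains modulo boundaries. -/
noncomputable def boundaryPreimage : Submodule R ((Rep.standardComplex R G).X 1) :=
  coinvKer R G _ ⊔ LinearMap.range ((Rep.standardComplex R G).d 2 1).hom.toLinearMap

variable {R G}

lemma single_sub_single_mem_coinvKer (f : Fin 2 → G) :
    (MonoidAlgebra.single f 1 - MonoidAlgebra.single ![1, (f 0)⁻¹ * f 1] 1 :
      (Rep.standardComplex R G).X 1) ∈ coinvKer R G _ := by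
  refine Submodule.subset_span ⟨f 0, MonoidAlgebra.single ![1, (f 0)⁻¹ * f 1] 1, ?_⟩
  congr 1
  erw [Representation.linearize_single]
  congr 1
  funext i
  show f 0 * ![1, (f 0)⁻¹ * f 1] i = f i
  fin_cases i <;> simp

lemma d_single_mem_boundaryPreimage (a b c : G) :
    (MonoidAlgebra.single ![b, c] 1 - MonoidAlgebra.single ![a, c] 1
      + MonoidAlgebra.single ![a, b] 1 : (Rep.standardComplex R G).X 1) ∈ boundaryPreimage R G := by
  refine Submodule.mem_sup_right ⟨MonoidAlgebra.single ![a, b, c] 1, ?_⟩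
  erw [Rep.standardComplex.d_apply, Rep.standardComplex.d_of]
  have h0 : ![a, b, c] ∘ (0 : Fin 3).succAbove = ![b, c] := by ext j; fin_cases j <;> rfl
  have h1 : ![a, b, c] ∘ (1 : Fin 3).succAbove = ![a, c] := by ext j; fin_cases j <;> rfl
  have h2 : ![a, b, c] ∘ (2 : Fin 3).succAbove = ![a, b] := by ext j; fin_cases j <;> rfl
  rw [Fin.sum_univ_three, h0, h1, h2]
  simp [sub_eq_add_neg, MonoidAlgebra.single_neg]

variable (R) in
noncomputable def edgeClass (g : G) : (Rep.standardComplex R G).X 1 ⧸ boundaryPreimage R G :=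
  Submodule.Quotient.mk (MonoidAlgebra.single ![1, g] 1)

lemma mk_single_eq_edgeClass (f : Fin 2 → G) :
    (Submodule.Quotient.mk (MonoidAlgebra.single f 1) :
      (Rep.standardComplex R G).X 1 ⧸ boundaryPreimage R G) = edgeClass R ((f 0)⁻¹ * f 1) :=
  (Submodule.Quotient.eq _).2 (Submodule.mem_sup_left (single_sub_single_mem_coinvKer f))

lemma edgeClass_mul (g h : G) : edgeClass R (g * h) = edgeClass R g + edgeClass R h := by
  have hd := (Submodule.Quotient.mk_eq_zero _).2 (d_single_mem_boundaryPreimage (R := R) 1 g (g * h))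
  erw [Submodule.Quotient.mk_add, Submodule.Quotient.mk_sub, mk_single_eq_edgeClass,
    mk_single_eq_edgeClass, mk_single_eq_edgeClass] at hd
  simp only [Matrix.cons_val_zero, Matrix.cons_val_one, inv_one, one_mul, inv_mul_cancel_left]
    at hd
  rw [eq_comm, ← sub_eq_zero, ← hd]
  abel

variable (R) in
noncomputable def edgeClassHom :
    G →* Multiplicative ((Rep.standardComplex R G).X 1 ⧸ boundaryPreimage R G) :=
  MonoidHom.mk' (fun g ↦ .ofAdd (edgeClass R g)) edgeClass_mul

lemma boundaryPreimage_eq_top (hG : commutator G = ⊤) : boundaryPreimage R G = ⊤ := by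
  have hclass (g : G) : edgeClass R g = 0 := by
    have hg : g ∈ commutator G := hG ▸ Subgroup.mem_top g
    exact ofAdd_eq_one.1 (MonoidHom.mem_ker.1 (Abelianization.commutator_subset_ker (edgeClassHom R) hg))
  rw [eq_top_iff]
  rintro v -
  induction v using MonoidAlgebra.induction_linear with
  | zero => exact zero_mem _
  | add x y hx hy => exact add_mem hx hy
  | single f r =>
    rw [← mul_one r, ← smul_eq_mul, ← MonoidAlgebra.smul_single]
    refine Submodule.smul_mem _ r ((Submodule.Quotient.mk_eq_zero _).1 ?_)
    exact (mk_single_eq_edgeClass (R := R) f).trans (hclass _)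

lemma surjective_chainComplex_d_two_one (htop : boundaryPreimage R G = ⊤) :
    Function.Surjective ((chainComplex R G).d 2 1) := by
  intro x
  obtain ⟨v, rfl⟩ := Submodule.Quotient.mk_surjective _ x
  obtain ⟨y, hy, z, ⟨w, rfl⟩, hyz⟩ := Submodule.mem_sup.1 (htop ▸ Submodule.mem_top (x := v))
  refine ⟨Submodule.Quotient.mk w, ?_⟩
  change (coinvFunctor R G).map ((Rep.standardComplex R G).d 2 1) (Submodule.Quotient.mk w) = _
  rw [coinvFunctor_map_mk, ← hyz, Submodule.Quotient.mk_add,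
    (Submodule.Quotient.mk_eq_zero _).2 hy, zero_add]
  rfl

theorem subsingleton_H_one_of_commutator_eq_top (hG : commutator G = ⊤) :
    Subsingleton (H R 1 G) := by
  have hexact : (chainComplex R G).ExactAt 1 := by
    rw [HomologicalComplex.exactAt_iff' _ 2 1 0 (by simp) (by simp),
      ShortComplex.moduleCat_exact_iff]
    exact fun x _ ↦ surjective_chainComplex_d_two_one (boundaryPreimage_eq_top hG) x
  exact ModuleCat.isZero_iff_subsingleton.1 (hexact.isZero_homology)

end GH

namespace GH.SL2
open Matrix
open scoped commutatorElement

variable {A : Type} [CommRing A]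

def E12 (x : A) : SL2 A := ⟨!![1, x; 0, 1], by simp [det_fin_two_of]⟩

def E21 (x : A) : SL2 A := ⟨!![1, 0; x, 1], by simp [det_fin_two_of]⟩

def diagUnit (u : Aˣ) : SL2 A := ⟨!![(u : A), 0; 0, ↑u⁻¹], by simp [det_fin_two_of]⟩

def weyl : SL2 A := ⟨!![0, -1; 1, 0], by simp [det_fin_two_of]⟩

@[simp] lemma coe_E12 (x : A) : (E12 x : Matrix (Fin 2) (Fin 2) A) = !![1, x; 0, 1] := rfl

@[simp] lemma coe_E21 (x : A) : (E21 x : Matrix (Fin 2) (Fin 2) A) = !![1, 0; x, 1] := rfl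

@[simp] lemma coe_diagUnit (u : Aˣ) : (diagUnit u : Matrix (Fin 2) (Fin 2) A) = !![(u : A), 0; 0, ↑u⁻¹] :=
  rfl

@[simp] lemma coe_weyl : ((weyl : SL2 A) : Matrix (Fin 2) (Fin 2) A) = !![0, -1; 1, 0] := rfl

lemma commutator_diagUnit_E12 (u : Aˣ) (x : A) :
    ⁅diagUnit u, E12 x⁆ = E12 (((u : A) ^ 2 - 1) * x) := by
  refine Subtype.ext ?_
  simp [commutatorElement_def, adjugate_fin_two_of]
  ring

lemma commutator_diagUnit_E21 (u : Aˣ) (x : A) :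
    ⁅diagUnit u⁻¹, E21 x⁆ = E21 (((u : A) ^ 2 - 1) * x) := by
  refine Subtype.ext ?_
  simp [commutatorElement_def, adjugate_fin_two_of]
  ring

lemma mem_of_isUnit_apply_one_zero {H : Subgroup (SL2 A)}
    (hE12 : ∀ x, E12 x ∈ H) (hE21 : ∀ x, E21 x ∈ H) (M : SL2 A) (hc : IsUnit (M 1 0)) :
    M ∈ H := by
  obtain ⟨c, hc⟩ := hc
  have hdet : M 0 0 * M 1 1 - M 0 1 * c = 1 := by rw [hc, ← det_fin_two]; exact M.2
  have : M = E12 ((M 0 0 - 1) * (↑c⁻¹ : A)) * E21 (c : A) * E12 ((M 1 1 - 1) * (↑c⁻¹ : A)) := by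
    ext i j
    fin_cases i <;> fin_cases j <;> simp [← hc]
    · linear_combination (-M 0 1) * c.mul_inv - (↑c⁻¹ : A) * hdet
    · linear_combination (1 - M 1 1) * c.mul_inv
  rw [this]
  exact mul_mem (mul_mem (hE12 _) (hE21 _)) (hE12 _)

lemma mem_of_apply_one_zero_eq_zero {H : Subgroup (SL2 A)}
    (hE12 : ∀ x, E12 x ∈ H) (hE21 : ∀ x, E21 x ∈ H) (M : SL2 A) (hc : M 1 0 = 0) :
    M ∈ H := by
  have hM00 : IsUnit (M 0 0) := by
    refine IsUnit.of_mul_eq_one (M 1 1) ?_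
    have hdet := M.2
    rwa [det_fin_two, hc, mul_zero, sub_zero] at hdet
  have hN : E21 1 * M ∈ H := by
    refine mem_of_isUnit_apply_one_zero hE12 hE21 _ ?_
    simpa [mul_apply, Fin.sum_univ_two, hc] using hM00
  simpa using mul_mem (inv_mem (hE21 1)) hN

theorem eq_top_of_exists_sub_mul_lt {H : Subgroup (SL2 A)}
    (hE12 : ∀ x, E12 x ∈ H) (hE21 : ∀ x, E21 x ∈ H) (w : A → ℕ)
    (hw : ∀ a c, c ≠ 0 → ∃ q, a - q * c = 0 ∨ w (a - q * c) < w c) : H = ⊤ := by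
  have hweyl : weyl ∈ H := mem_of_isUnit_apply_one_zero hE12 hE21 _ (by simp)
  suffices ∀ M : SL2 A, M ∈ H from eq_top_iff.2 fun M _ ↦ this M
  intro M
  induction hn : w (M 1 0) using Nat.strong_induction_on generalizing M with
  | _ n ih =>
    by_cases hc : M 1 0 = 0
    · exact mem_of_apply_one_zero_eq_zero hE12 hE21 M hc
    obtain ⟨q, hq⟩ := hw (M 0 0) (M 1 0) hc
    -- one step of the Euclidean algorithm on the first column
    set N := weyl * ((E12 q)⁻¹ * M)
    have hN : N 1 0 = M 0 0 - q * M 1 0 := by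
      simp [N, adjugate_fin_two_of, mul_apply, Fin.sum_univ_two, vecMul, dotProduct]
      ring
    have hNmem : N ∈ H := by
      rcases hq with h0 | hlt
      · exact mem_of_apply_one_zero_eq_zero hE12 hE21 N (hN.trans h0)
      · exact ih _ (hn ▸ hlt) N (by rw [hN])
    have hM : M = E12 q * (weyl⁻¹ * N) := by simp [N]
    rw [hM]
    exact mul_mem (hE12 q) (mul_mem (inv_mem hweyl) hNmem)

lemma E12_mem_commutator (u : Aˣ) (hu : IsUnit ((u : A) ^ 2 - 1)) (x : A) :
    E12 x ∈ commutator (SL2 A) := by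
  obtain ⟨v, hv⟩ := hu
  have hx : E12 x = ⁅diagUnit u, E12 (↑v⁻¹ * x)⁆ := by
    rw [commutator_diagUnit_E12, ← hv, ← mul_assoc, Units.mul_inv, one_mul]
  rw [hx, commutator_def]
  exact Subgroup.commutator_mem_commutator (Subgroup.mem_top _) (Subgroup.mem_top _)

lemma E21_mem_commutator (u : Aˣ) (hu : IsUnit ((u : A) ^ 2 - 1)) (x : A) :
    E21 x ∈ commutator (SL2 A) := by
  obtain ⟨v, hv⟩ := hu
  have hx : E21 x = ⁅diagUnit u⁻¹, E21 (↑v⁻¹ * x)⁆ := by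
    rw [commutator_diagUnit_E21, ← hv, ← mul_assoc, Units.mul_inv, one_mul]
  rw [hx, commutator_def]
  exact Subgroup.commutator_mem_commutator (Subgroup.mem_top _) (Subgroup.mem_top _)

theorem commutator_eq_top_of_exists_sub_mul_lt (u : Aˣ) (hu : IsUnit ((u : A) ^ 2 - 1))
    (w : A → ℕ) (hw : ∀ a c, c ≠ 0 → ∃ q, a - q * c = 0 ∨ w (a - q * c) < w c) :
    commutator (SL2 A) = ⊤ :=
  eq_top_of_exists_sub_mul_lt (E12_mem_commutator u hu) (E21_mem_commutator u hu) w hw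

end GH.SL2

namespace LaurentPolynomial
open Polynomial

variable {K : Type} [Field K]

noncomputable def width (f : K[T;T⁻¹]) : ℕ :=
  sInf (natDegree '' {p : K[X] | ∃ n : ℤ, toLaurent p = f * T n})

lemma exists_natDegree_eq_width (f : K[T;T⁻¹]) :
    ∃ p : K[X], (∃ n : ℤ, toLaurent p = f * T n) ∧ p.natDegree = width f := by
  obtain ⟨n, p, hp⟩ := exists_T_pow f
  have hne : {p : K[X] | ∃ n : ℤ, toLaurent p = f * T n}.Nonempty := ⟨p, n, hp⟩
  exact Nat.sInf_mem (hne.image natDegree)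

lemma width_le_natDegree {f : K[T;T⁻¹]} {p : K[X]} {n : ℤ} (h : toLaurent p = f * T n) :
    width f ≤ p.natDegree :=
  Nat.sInf_le ⟨p, ⟨n, h⟩, rfl⟩

lemma exists_sub_mul_width_lt (a : K[T;T⁻¹]) {c : K[T;T⁻¹]} (hc : c ≠ 0) :
    ∃ q, a - q * c = 0 ∨ width (a - q * c) < width c := by
  obtain ⟨p, ⟨m, hp⟩, hpc⟩ := exists_natDegree_eq_width c
  obtain ⟨n, a₀, ha⟩ := exists_T_pow a
  have hp0 : p ≠ 0 := by
    rintro rfl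
    exact hc ((isUnit_T m).mul_left_eq_zero.1 (by rw [← hp, map_zero]))
  refine ⟨toLaurent (a₀ / p) * T (m - n), ?_⟩
  have hrem : toLaurent (a₀ % p) = (a - toLaurent (a₀ / p) * T (m - n) * c) * T n := by
    rw [EuclideanDomain.mod_eq_sub_mul_div, map_sub, map_mul, ha, hp, sub_mul]
    congr 1
    rw [mul_right_comm _ _ c, mul_assoc, mul_assoc, ← T_add]
    ring_nf
  by_cases hr : a₀ % p = 0
  · left
    rw [hr, map_zero, eq_comm] at hrem
    exact (isUnit_T n).mul_left_eq_zero.1 hrem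
  · right
    calc width _ ≤ (a₀ % p).natDegree := width_le_natDegree hrem
      _ < p.natDegree := natDegree_lt_natDegree hr (EuclideanDomain.mod_lt a₀ hp0)
      _ = width c := hpc

lemma exists_isUnit_sq_sub_one [Infinite K] :
    ∃ u : (K[T;T⁻¹])ˣ, IsUnit ((u : K[T;T⁻¹]) ^ 2 - 1) := by
  classical
  obtain ⟨a, ha⟩ := Infinite.exists_notMem_finset ({0, 1, -1} : Finset K)
  simp only [Finset.mem_insert, Finset.mem_singleton, not_or] at ha
  obtain ⟨ha0, ha1, ha1'⟩ := ha
  have ha2 : a ^ 2 - 1 ≠ 0 := by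
    rw [show a ^ 2 - 1 = (a - 1) * (a + 1) by ring]
    exact mul_ne_zero (sub_ne_zero.2 ha1) fun h ↦ ha1' (eq_neg_of_add_eq_zero_left h)
  let u : (K[T;T⁻¹])ˣ := Units.map C.toMonoidHom (Units.mk0 a ha0)
  have hu : (u : K[T;T⁻¹]) ^ 2 - 1 = C (a ^ 2 - 1) := by simp [u]
  exact ⟨u, hu ▸ (isUnit_iff_ne_zero.2 ha2).map C⟩

end LaurentPolynomial

/-- For an infinite field `k`, `H₁(SL₂(k[t,t⁻¹]); ℤ) = 0`; equivalently,
`SL₂(k[t,t⁻¹])` is a perfect group. -/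
theorem statement1 (k : Type) [Field k] [Infinite k] :
    Subsingleton (GH.H ℤ 1 (GH.SL2 (LaurentPolynomial k))) ∧
      commutator (GH.SL2 (LaurentPolynomial k)) = ⊤ := by
  obtain ⟨u, hu⟩ := LaurentPolynomial.exists_isUnit_sq_sub_one (K := k)
  have hperfect : commutator (GH.SL2 (LaurentPolynomial k)) = ⊤ :=
    GH.SL2.commutator_eq_top_of_exists_sub_mul_lt u hu LaurentPolynomial.width
      fun a _ hc ↦ LaurentPolynomial.exists_sub_mul_width_lt a hc
  exact ⟨GH.subsingleton_H_one_of_commutator_eq_top hperfect, hperfect⟩
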